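/- arXiv:math/0503466 — 5 statements merged into one kernel-verified Lean document; each statement's English description precedes it below -/
import Mathlib

section
/- The map sending (μ, ν) to (μ', ν') with 2μ' = (2aμ + 2bν + c)/(2gμ + 2hν + i) and 2ν' = (2dμ + 2eν + f)/(2gμ + 2hν + i), for a matrix ((a,b,c),(d,e,f),(g,h,i)) ∈ GL₃(ℤ), defines a group action of GL₃(ℤ) on the set of pairs (μ, ν) ∈ ℝ² such that {1, μ, ν} is linearly independent over ℚ. -/
/-!
In homogeneous coordinates `(2μ, 2ν, 1)` the map is the projective action of `A`: the entries of
`A (2μ, 2ν, 1)` are the two numerators and the denominator, and rescaling by the inverse of the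
last entry gives the homogeneous coordinates of `(μ', ν')`. A matrix invertible over `ℤ` (hence
over `ℚ`) preserves `ℚ`-linear independence of the three coordinates, so the denominator, being
one of them, is nonzero and the image is again admissible. For `A * B`, both sides have
homogeneous coordinates proportional to `AB (2μ, 2ν, 1)`, hence they agree.
-/

/-- The fractional linear transformation of `(μ, ν)` associated to a matrix
`((a,b,c),(d,e,f),(g,h,i)) ∈ GL₃(ℤ)`:
`2μ' = (2aμ + 2bν + c)/(2gμ + 2hν + i)`, `2ν' = (2dμ + 2eν + f)/(2gμ + 2hν + i)`. -/
noncomputable def heisAct3 (A : GL (Fin 3) ℤ) (p : ℝ × ℝ) : ℝ × ℝ :=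
  ((2 * ((A : Matrix (Fin 3) (Fin 3) ℤ) 0 0 : ℝ) * p.1 + 2 * ((A : Matrix (Fin 3) (Fin 3) ℤ) 0 1 : ℝ) * p.2 +
        ((A : Matrix (Fin 3) (Fin 3) ℤ) 0 2 : ℝ)) /
      (2 * (2 * ((A : Matrix (Fin 3) (Fin 3) ℤ) 2 0 : ℝ) * p.1 + 2 * ((A : Matrix (Fin 3) (Fin 3) ℤ) 2 1 : ℝ) * p.2 +
        ((A : Matrix (Fin 3) (Fin 3) ℤ) 2 2 : ℝ))),
    (2 * ((A : Matrix (Fin 3) (Fin 3) ℤ) 1 0 : ℝ) * p.1 + 2 * ((A : Matrix (Fin 3) (Fin 3) ℤ) 1 1 : ℝ) * p.2 +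
        ((A : Matrix (Fin 3) (Fin 3) ℤ) 1 2 : ℝ)) /
      (2 * (2 * ((A : Matrix (Fin 3) (Fin 3) ℤ) 2 0 : ℝ) * p.1 + 2 * ((A : Matrix (Fin 3) (Fin 3) ℤ) 2 1 : ℝ) * p.2 +
        ((A : Matrix (Fin 3) (Fin 3) ℤ) 2 2 : ℝ))))

open Matrix

theorem LinearIndependent.mulVec_map {R K L ι : Type*} [CommRing R] [CommRing K] [CommRing L]
    [Algebra R K] [Algebra K L] [Algebra R L] [IsScalarTower R K L] [Fintype ι] [DecidableEq ι]
    {v : ι → L} (hv : LinearIndependent K v) (M : GL ι R) :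
    LinearIndependent K ((GeneralLinearGroup.map (algebraMap R L) M : Matrix ι ι L) *ᵥ v) := by
  rw [Fintype.linearIndependent_iff] at hv ⊢
  intro q hq
  have hMq : q ᵥ* (GeneralLinearGroup.map (algebraMap R K) M : Matrix ι ι K) = 0 := by
    refine funext fun j => hv _ ?_ j
    simp only [Matrix.mulVec, dotProduct, Finset.smul_sum] at hq
    rw [Finset.sum_comm] at hq
    simpa [Matrix.vecMul, dotProduct, Finset.sum_smul, Finset.mul_sum, smul_smul, Algebra.smul_def,
      IsScalarTower.algebraMap_apply R K L, mul_comm, mul_left_comm, mul_assoc] using hq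
  have := vecMul_injective_of_isUnit (GeneralLinearGroup.map (algebraMap R K) M).isUnit
    (hMq.trans (zero_vecMul _).symm)
  simp [this]

theorem LinearIndependent.const_smul {K L ι : Type*} [CommRing K] [Field L] [Algebra K L]
    {v : ι → L} (hv : LinearIndependent K v) {c : L} (hc : c ≠ 0) : LinearIndependent K (c • v) :=
  hv.map' (LinearMap.mulLeft K c) (LinearMap.ker_eq_bot.mpr (mul_right_injective₀ hc))

def homCoords (p : ℝ × ℝ) : Fin 3 → ℝ := ![2 * p.1, 2 * p.2, 1]

local notation "⌈" A "⌉" => ((GeneralLinearGroup.map (algebraMap ℤ ℝ) A : Matrix (Fin 3) (Fin 3) ℝ))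

theorem linearIndependent_homCoords_iff (p : ℝ × ℝ) :
    LinearIndependent ℚ (homCoords p) ↔ LinearIndependent ℚ ![(1 : ℝ), p.1, p.2] := by
  let P : GL (Fin 3) ℚ := GeneralLinearGroup.mkOfDetNeZero !![0, 2, 0; 0, 0, 2; 1, 0, 0]
    (by simp [det_fin_three])
  have hP : (GeneralLinearGroup.map (algebraMap ℚ ℝ) P : Matrix (Fin 3) (Fin 3) ℝ) *ᵥ
      ![1, p.1, p.2] = homCoords p := by
    ext k
    fin_cases k <;>
      simp [P, homCoords, GeneralLinearGroup.mkOfDetNeZero, mulVec, dotProduct, Fin.sum_univ_three]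
  have hP' : (GeneralLinearGroup.map (algebraMap ℚ ℝ) P⁻¹ : Matrix (Fin 3) (Fin 3) ℝ) *ᵥ
      homCoords p = ![1, p.1, p.2] := by
    rw [← hP, mulVec_mulVec, ← Units.val_mul, ← map_mul, inv_mul_cancel, map_one, Units.val_one,
      one_mulVec]
  exact ⟨fun h => hP' ▸ h.mulVec_map P⁻¹, fun h => hP ▸ h.mulVec_map P⟩

theorem mulVec_homCoords (A : GL (Fin 3) ℤ) (p : ℝ × ℝ) (k : Fin 3) :
    (⌈A⌉ *ᵥ homCoords p) k =
      2 * ((A : Matrix (Fin 3) (Fin 3) ℤ) k 0 : ℝ) * p.1 +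
        2 * ((A : Matrix (Fin 3) (Fin 3) ℤ) k 1 : ℝ) * p.2 + ((A : Matrix (Fin 3) (Fin 3) ℤ) k 2 : ℝ) := by
  simp [mulVec, dotProduct, Fin.sum_univ_three, homCoords]
  ring

theorem homCoords_heisAct3 (A : GL (Fin 3) ℤ) (p : ℝ × ℝ) (hD : (⌈A⌉ *ᵥ homCoords p) 2 ≠ 0) :
    homCoords (heisAct3 A p) = ((⌈A⌉ *ᵥ homCoords p) 2)⁻¹ • (⌈A⌉ *ᵥ homCoords p) := by
  rw [mulVec_homCoords] at hD
  ext k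
  simp only [Pi.smul_apply, mulVec_homCoords, smul_eq_mul]
  fin_cases k <;> simp [homCoords, heisAct3, inv_mul_cancel₀ hD] <;> field_simp

theorem eq_of_homCoords_eq_smul {p q : ℝ × ℝ} {c d : ℝ} {u : Fin 3 → ℝ}
    (hp : homCoords p = c • u) (hq : homCoords q = d • u) : p = q := by
  have hc := congr_fun hp 2
  have hd := congr_fun hq 2
  simp only [homCoords, Matrix.cons_val, Pi.smul_apply, smul_eq_mul] at hc hd
  have hu : u 2 ≠ 0 := right_ne_zero_of_mul (hc ▸ one_ne_zero)
  have hcd : c = d := mul_right_cancel₀ hu (hc.symm.trans hd)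
  have h := hp.trans (hcd ▸ hq.symm)
  exact Prod.ext (by simpa [homCoords] using congr_fun h 0) (by simpa [homCoords] using congr_fun h 1)

theorem mulVec_homCoords_two_ne_zero (A : GL (Fin 3) ℤ) {p : ℝ × ℝ}
    (hp : LinearIndependent ℚ (homCoords p)) : (⌈A⌉ *ᵥ homCoords p) 2 ≠ 0 :=
  (hp.mulVec_map A).ne_zero 2

theorem linearIndependent_homCoords_heisAct3 (A : GL (Fin 3) ℤ) {p : ℝ × ℝ}
    (hp : LinearIndependent ℚ (homCoords p)) : LinearIndependent ℚ (homCoords (heisAct3 A p)) := by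
  rw [homCoords_heisAct3 A p (mulVec_homCoords_two_ne_zero A hp)]
  exact (hp.mulVec_map A).const_smul (inv_ne_zero (mulVec_homCoords_two_ne_zero A hp))

theorem heisAct3_one (p : ℝ × ℝ) : heisAct3 1 p = p := by
  simp [heisAct3]

theorem heisAct3_mul (A B : GL (Fin 3) ℤ) {p : ℝ × ℝ} (hp : LinearIndependent ℚ (homCoords p)) :
    heisAct3 (A * B) p = heisAct3 A (heisAct3 B p) := by
  have hB := homCoords_heisAct3 B p (mulVec_homCoords_two_ne_zero B hp)
  have hA := homCoords_heisAct3 A _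
    (mulVec_homCoords_two_ne_zero A (linearIndependent_homCoords_heisAct3 B hp))
  rw [hB, mulVec_smul, smul_smul, mulVec_mulVec, ← Units.val_mul, ← map_mul] at hA
  exact eq_of_homCoords_eq_smul
    (homCoords_heisAct3 (A * B) p (mulVec_homCoords_two_ne_zero _ hp)) hA

theorem stmt3 :
    (∀ (A : GL (Fin 3) ℤ) (μ ν : ℝ), LinearIndependent ℚ ![(1 : ℝ), μ, ν] →
      2 * ((A : Matrix (Fin 3) (Fin 3) ℤ) 2 0 : ℝ) * μ + 2 * ((A : Matrix (Fin 3) (Fin 3) ℤ) 2 1 : ℝ) * ν +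
        ((A : Matrix (Fin 3) (Fin 3) ℤ) 2 2 : ℝ) ≠ 0 ∧
      LinearIndependent ℚ ![(1 : ℝ), (heisAct3 A (μ, ν)).1, (heisAct3 A (μ, ν)).2]) ∧
    (∀ (μ ν : ℝ), LinearIndependent ℚ ![(1 : ℝ), μ, ν] → heisAct3 1 (μ, ν) = (μ, ν)) ∧
    (∀ (A B : GL (Fin 3) ℤ) (μ ν : ℝ), LinearIndependent ℚ ![(1 : ℝ), μ, ν] →
      heisAct3 (A * B) (μ, ν) = heisAct3 A (heisAct3 B (μ, ν))) := by
  refine ⟨fun A μ ν h => ?_, fun μ ν _ => heisAct3_one _,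
    fun A B μ ν h => heisAct3_mul A B ((linearIndependent_homCoords_iff _).mpr h)⟩
  have hp := (linearIndependent_homCoords_iff (μ, ν)).mpr h
  exact ⟨mulVec_homCoords A (μ, ν) 2 ▸ mulVec_homCoords_two_ne_zero A hp,
    (linearIndependent_homCoords_iff _).mp (linearIndependent_homCoords_heisAct3 A hp)⟩
end

section
/- Let α, α' be irrational and q, q' nonzero integers. If αℤ + (1/q)ℤ = r(α'ℤ + (1/q')ℤ) for some positive real r, then there is a matrix ((a,b),(c,d)) ∈ GL₂(ℤ) with qα = (a q'α' + b)/(c q'α' + d). -/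
/-!
Multiplying by `q`, the hypothesis says that the subgroups `ℤ(qα) + ℤ` and `u(ℤ(q'α') + ℤ)`
of `ℝ`, with `u = qr/q'`, coincide. As `qα` is irrational, `(qα, 1)` is a `ℤ`-basis of this
group, so the integer matrices expressing each generating pair in terms of the other are
mutually inverse. Dividing the two rows of `(qα, 1) = A (u q'α', u)` gives the Möbius relation.
-/

theorem Irrational.linearIndependent_int_pair_one {β : ℝ} (hβ : Irrational β) :
    LinearIndependent ℤ ![β, 1] := by
  refine LinearIndependent.pair_iff.mpr fun m n h => ?_
  simp only [zsmul_eq_mul, mul_one] at h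
  have hm : m = 0 := by
    by_contra hm
    exact (hβ.intCast_mul hm).add_intCast n |>.ne_zero h
  subst hm
  simpa using h

theorem AddSubgroup.image_mul_left_closure_pair {R : Type*} [NonUnitalNonAssocRing R]
    (c a b : R) :
    (fun x => c * x) '' (AddSubgroup.closure {a, b} : Set R) =
      AddSubgroup.closure {c * a, c * b} := by
  have := AddMonoidHom.map_closure (AddMonoidHom.mulLeft c) {a, b}
  rw [Set.image_pair] at this
  exact congrArg SetLike.coe this

theorem AddSubgroup.exists_eq_sum_zsmul_of_closure_range_eq {G ι : Type*} [AddCommGroup G]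
    [Fintype ι] [DecidableEq ι] {v w : ι → G} (hv : LinearIndependent ℤ v)
    (h : AddSubgroup.closure (Set.range v) = AddSubgroup.closure (Set.range w)) :
    ∃ A : GL ι ℤ, ∀ i, v i = ∑ j, (A : Matrix ι ι ℤ) i j • w j := by
  have hvw : ∀ i, ∃ a : ι → ℤ, v i = ∑ j, a j • w j := fun i =>
    AddSubgroup.mem_closure_range_iff_of_fintype.mp (h ▸ AddSubgroup.subset_closure ⟨i, rfl⟩)
  have hwv : ∀ j, ∃ b : ι → ℤ, w j = ∑ k, b k • v k := fun j =>
    AddSubgroup.mem_closure_range_iff_of_fintype.mp (h ▸ AddSubgroup.subset_closure ⟨j, rfl⟩)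
  choose M hM using hvw
  choose N hN using hwv
  have hMN : Matrix.of M * Matrix.of N = 1 := by
    ext i k
    refine Fintype.linearIndependent_iffₛ.mp hv _ _ ?_ k
    calc ∑ k, (Matrix.of M * Matrix.of N) i k • v k
        = ∑ j, M i j • ∑ k, N j k • v k := by
          simp only [Matrix.mul_apply, Matrix.of_apply, Finset.sum_smul, Finset.smul_sum, mul_smul]
          exact Finset.sum_comm
      _ = v i := by simp only [← hN, ← hM]
      _ = ∑ k, (1 : Matrix ι ι ℤ) i k • v k := by simp [Matrix.one_apply]
  exact ⟨⟨_, _, hMN, mul_eq_one_comm.mp hMN⟩, hM⟩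

theorem stmt7_general (α α' : ℝ) (hα : Irrational α)
    (q q' : ℤ) (hq : q ≠ 0) (hq' : q' ≠ 0) (r : ℝ)
    (heq : (AddSubgroup.closure {α, 1 / (q : ℝ)} : Set ℝ) =
      (fun x => r * x) '' (AddSubgroup.closure {α', 1 / (q' : ℝ)} : Set ℝ)) :
    ∃ A : GL (Fin 2) ℤ,
      ((A : Matrix (Fin 2) (Fin 2) ℤ) 1 0 : ℝ) * ((q' : ℝ) * α') + ((A : Matrix (Fin 2) (Fin 2) ℤ) 1 1 : ℝ) ≠ 0 ∧
      (q : ℝ) * α =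
        (((A : Matrix (Fin 2) (Fin 2) ℤ) 0 0 : ℝ) * ((q' : ℝ) * α') + ((A : Matrix (Fin 2) (Fin 2) ℤ) 0 1 : ℝ)) /
        (((A : Matrix (Fin 2) (Fin 2) ℤ) 1 0 : ℝ) * ((q' : ℝ) * α') + ((A : Matrix (Fin 2) (Fin 2) ℤ) 1 1 : ℝ)) := by
  set t : ℝ := q' * α'
  set u : ℝ := q * r / q'
  have hlattice : AddSubgroup.closure {(q : ℝ) * α, 1} = AddSubgroup.closure {u * t, u} := by
    rw [AddSubgroup.image_mul_left_closure_pair] at heq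
    have := congrArg ((fun x => (q : ℝ) * x) '' ·) heq
    simp only [AddSubgroup.image_mul_left_closure_pair, SetLike.coe_set_eq] at this
    rwa [mul_one_div_cancel (Int.cast_ne_zero.mpr hq),
      show (q : ℝ) * (r * α') = u * t by simp only [u, t]; field_simp,
      show (q : ℝ) * (r * (1 / q')) = u by ring] at this
  obtain ⟨A, hA⟩ := AddSubgroup.exists_eq_sum_zsmul_of_closure_range_eq (w := ![u * t, u])
    (hα.intCast_mul hq).linearIndependent_int_pair_one
    (by rwa [Matrix.range_cons_cons_empty, Matrix.range_cons_cons_empty])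
  have hβ := hA 0
  have h1 := hA 1
  simp only [Fin.sum_univ_two, zsmul_eq_mul, Matrix.cons_val_zero, Matrix.cons_val_one] at hβ h1
  have hden : (A 1 0 : ℝ) * t + A 1 1 ≠ 0 := fun h =>
    one_ne_zero (h1.trans (by linear_combination u * h))
  refine ⟨A, hden, ?_⟩
  rw [eq_div_iff hden, hβ]
  linear_combination (-(A 0 0 : ℝ) * t - A 0 1) * h1

theorem stmt7 (α α' : ℝ) (hα : Irrational α) (hα' : Irrational α')
    (q q' : ℤ) (hq : q ≠ 0) (hq' : q' ≠ 0) (r : ℝ) (hr : 0 < r)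
    (heq : (AddSubgroup.closure {α, 1 / (q : ℝ)} : Set ℝ) =
      (fun x => r * x) '' (AddSubgroup.closure {α', 1 / (q' : ℝ)} : Set ℝ)) :
    ∃ A : GL (Fin 2) ℤ,
      ((A : Matrix (Fin 2) (Fin 2) ℤ) 1 0 : ℝ) * ((q' : ℝ) * α') + ((A : Matrix (Fin 2) (Fin 2) ℤ) 1 1 : ℝ) ≠ 0 ∧
      (q : ℝ) * α =
        (((A : Matrix (Fin 2) (Fin 2) ℤ) 0 0 : ℝ) * ((q' : ℝ) * α') + ((A : Matrix (Fin 2) (Fin 2) ℤ) 0 1 : ℝ)) /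
        (((A : Matrix (Fin 2) (Fin 2) ℤ) 1 0 : ℝ) * ((q' : ℝ) * α') + ((A : Matrix (Fin 2) (Fin 2) ℤ) 1 1 : ℝ)) :=
  stmt7_general α α' hα q q' hq hq' r heq
end

section
/- If α and β are irrational real numbers and λ is a positive real with αℤ + ℤ = λ(βℤ + ℤ), then there exists ((a,b),(c,d)) ∈ GL₂(ℤ) such that α = (aβ + b)/(cβ + d). -/
lemma irr_key (β : ℝ) (hβ : Irrational β) (m n : ℤ) (h : (m : ℝ) * β + n = 0) :
    m = 0 ∧ n = 0 := by
  by_cases hm : m = 0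
  · subst hm
    simp at h
    exact ⟨rfl, by exact_mod_cast h⟩
  · exfalso
    have hm' : (m : ℝ) ≠ 0 := Int.cast_ne_zero.mpr hm
    have : β = ((-n / m : ℚ) : ℝ) := by
      push_cast
      field_simp
      linarith
    exact hβ ⟨(-n / m : ℚ), this.symm⟩

theorem stmt8 (α β : ℝ) (hα : Irrational α) (hβ : Irrational β) (l : ℝ) (hl : 0 < l)
    (heq : (AddSubgroup.closure {α, (1 : ℝ)} : Set ℝ) =
      (fun x => l * x) '' (AddSubgroup.closure {β, (1 : ℝ)} : Set ℝ)) :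
    ∃ A : GL (Fin 2) ℤ,
      ((A : Matrix (Fin 2) (Fin 2) ℤ) 1 0 : ℝ) * β + ((A : Matrix (Fin 2) (Fin 2) ℤ) 1 1 : ℝ) ≠ 0 ∧
      α = (((A : Matrix (Fin 2) (Fin 2) ℤ) 0 0 : ℝ) * β + ((A : Matrix (Fin 2) (Fin 2) ℤ) 0 1 : ℝ)) /
          (((A : Matrix (Fin 2) (Fin 2) ℤ) 1 0 : ℝ) * β + ((A : Matrix (Fin 2) (Fin 2) ℤ) 1 1 : ℝ)) := by
  have hmemβ : ∀ x : ℝ, x ∈ AddSubgroup.closure {β, (1:ℝ)} ↔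
      ∃ m n : ℤ, (m : ℝ) * β + n = x := by
    intro x
    rw [AddSubgroup.mem_closure_pair]
    simp [zsmul_eq_mul]
  have hmemα : ∀ x : ℝ, x ∈ AddSubgroup.closure {α, (1:ℝ)} ↔
      ∃ m n : ℤ, (m : ℝ) * α + n = x := by
    intro x
    rw [AddSubgroup.mem_closure_pair]
    simp [zsmul_eq_mul]
  -- α = l (aβ + b)
  have hαmem : α ∈ (AddSubgroup.closure {α, (1:ℝ)} : Set ℝ) :=
    AddSubgroup.subset_closure (by simp)
  rw [heq] at hαmem
  obtain ⟨x, hx, hαx⟩ := hαmem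
  obtain ⟨a, b, hab⟩ := (hmemβ x).mp hx
  have hα_eq : α = l * ((a : ℝ) * β + b) := by rw [hab]; exact hαx.symm
  -- 1 = l (cβ + d)
  have h1mem : (1:ℝ) ∈ (AddSubgroup.closure {α, (1:ℝ)} : Set ℝ) :=
    AddSubgroup.subset_closure (by simp)
  rw [heq] at h1mem
  obtain ⟨y, hy, h1y⟩ := h1mem
  obtain ⟨c, d, hcd⟩ := (hmemβ y).mp hy
  have h1_eq : (1:ℝ) = l * ((c : ℝ) * β + d) := by rw [hcd]; exact h1y.symm
  -- l β = p α + q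
  have hlβ : l * β ∈ (AddSubgroup.closure {α, (1:ℝ)} : Set ℝ) := by
    rw [heq]
    exact ⟨β, AddSubgroup.subset_closure (by simp), rfl⟩
  obtain ⟨p, q, hpq⟩ := (hmemα _).mp hlβ
  -- l = r α + s
  have hl1 : l * 1 ∈ (AddSubgroup.closure {α, (1:ℝ)} : Set ℝ) := by
    rw [heq]
    exact ⟨1, AddSubgroup.subset_closure (by simp), rfl⟩
  obtain ⟨r, s, hrs⟩ := (hmemα _).mp hl1
  have hlne : l ≠ 0 := ne_of_gt hl
  -- derive integer equations
  have e1 : ((p * a + q * c - 1 : ℤ) : ℝ) * β + ((p * b + q * d : ℤ) : ℝ) = 0 := by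
    have : l * β = (p : ℝ) * (l * ((a:ℝ) * β + b)) + (q : ℝ) * (l * ((c:ℝ) * β + d)) := by
      rw [← hα_eq, ← h1_eq]; linarith [hpq]
    push_cast
    have := mul_left_cancel₀ hlne (by ring_nf; ring_nf at this; linarith : l * β = l * ((p : ℝ) * ((a:ℝ) * β + b) + (q : ℝ) * ((c:ℝ) * β + d)))
    nlinarith [this]
  have e2 : ((r * a + s * c : ℤ) : ℝ) * β + ((r * b + s * d - 1 : ℤ) : ℝ) = 0 := by
    have : l * 1 = (r : ℝ) * (l * ((a:ℝ) * β + b)) + (s : ℝ) * (l * ((c:ℝ) * β + d)) := by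
      rw [← hα_eq, ← h1_eq]; linarith [hrs]
    push_cast
    have := mul_left_cancel₀ hlne (by ring_nf; ring_nf at this; linarith : l * 1 = l * ((r : ℝ) * ((a:ℝ) * β + b) + (s : ℝ) * ((c:ℝ) * β + d)))
    nlinarith [this]
  obtain ⟨e11, e12⟩ := irr_key β hβ _ _ e1
  obtain ⟨e21, e22⟩ := irr_key β hβ _ _ e2
  have he11 : p * a + q * c = 1 := by omega
  have he22 : r * b + s * d = 1 := by omega
  -- matrices
  set M : Matrix (Fin 2) (Fin 2) ℤ := !![a, b; c, d] with hM
  set N : Matrix (Fin 2) (Fin 2) ℤ := !![p, q; r, s] with hN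
  have hNM : N * M = 1 := by
    rw [hM, hN]
    ext i j
    fin_cases i <;> fin_cases j <;>
      simp [Matrix.mul_apply, Fin.sum_univ_succ] <;> omega
  have hMN : M * N = 1 := mul_eq_one_comm.mpr hNM
  refine ⟨⟨M, N, hMN, hNM⟩, ?_, ?_⟩
  · have : ((c:ℝ) * β + d) = 1 / l := by field_simp [h1_eq.symm]; linarith [h1_eq]
    simp only [hM]
    simp [Matrix.GeneralLinearGroup]
    rw [this]
    positivity
  · have hcd0 : ((c:ℝ) * β + d) ≠ 0 := by
      intro h0
      rw [h0, mul_zero] at h1_eq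
      exact one_ne_zero h1_eq
    have : ((M : Matrix (Fin 2) (Fin 2) ℤ) : Matrix (Fin 2) (Fin 2) ℤ) = M := rfl
    show α = (((M 0 0 : ℤ) : ℝ) * β + (M 0 1 : ℤ)) / (((M 1 0 : ℤ) : ℝ) * β + (M 1 1 : ℤ))
    rw [show M 0 0 = a by simp [hM], show M 0 1 = b by simp [hM],
        show M 1 0 = c by simp [hM], show M 1 1 = d by simp [hM]]
    rw [hα_eq]
    rw [eq_div_iff hcd0]
    have h1 : l * ((c:ℝ) * β + d) = 1 := h1_eq.symm
    linear_combination ((a:ℝ) * β + b) * h1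
end

section
/- Suppose {1, μ, ν} and {1, μ', ν'} are each linearly independent over ℚ, and ℤ + 2μℤ + 2νℤ = r(ℤ + 2μ'ℤ + 2ν'ℤ) for some positive real r. Then there exists A ∈ GL₃(ℤ) carrying (μ, ν) to (μ', ν') under the fractional linear action 2μ' = (2aμ+2bν+c)/(2gμ+2hν+i), 2ν' = (2dμ+2eν+f)/(2gμ+2hν+i). -/
/-!
Write `w = (2μ, 2ν, 1)` and `w' = (2μ', 2ν', 1)`. Since `G_{μν} = r G_{μ'ν'}`, each coordinate of
`r w'` is an integer combination of `w`, and each coordinate of `w` is `r` times an integer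
combination of `w'`: `r w' = A w` and `w = r B w'` with integer matrices `A`, `B`. Then
`w = B A w`, and the `ℤ`-independence of `w` forces `B A = 1`, so `A ∈ GL₃(ℤ)`. The fractional
linear formulas are the ratios of the coordinates of `A w = r w'`, whose last coordinate is `r`.
-/

open Matrix Set

section

variable {R ι : Type*} [CommRing R] [Fintype ι]

lemma intCast_map_mulVec_apply (M : Matrix ι ι ℤ) (v : ι → R) (i : ι) :
    (M.map (Int.castRingHom R) *ᵥ v) i = ∑ j, M i j • v j := by
  simp [mulVec, dotProduct, zsmul_eq_mul]

lemma exists_intMatrix_mulVec_eq {v w : ι → R} (h : ∀ i, w i ∈ AddSubgroup.closure (range v)) :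
    ∃ M : Matrix ι ι ℤ, M.map (Int.castRingHom R) *ᵥ v = w := by
  choose M hM using fun i ↦ AddSubgroup.mem_closure_range_iff_of_fintype.1 (h i)
  exact ⟨Matrix.of M, funext fun i ↦ by rw [intCast_map_mulVec_apply, hM i]; rfl⟩

lemma LinearIndependent.intCast_map_mulVec_injective {v : ι → R} (hv : LinearIndependent ℤ v) :
    Function.Injective fun M : Matrix ι ι ℤ ↦ M.map (Int.castRingHom R) *ᵥ v :=
  fun M N h ↦ Matrix.ext fun i ↦ Fintype.linearIndependent_iffₛ.1 hv (M i) (N i) <| by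
    simpa only [intCast_map_mulVec_apply] using congr_fun h i

theorem exists_GL_mulVec_eq_smul_of_closure_eq [DecidableEq ι] {v v' : ι → R} {r : R}
    (hv : LinearIndependent ℤ v)
    (h : (AddSubgroup.closure (range v) : Set R) =
      (r * ·) '' AddSubgroup.closure (range v')) :
    ∃ A : GL ι ℤ, (A : Matrix ι ι ℤ).map (Int.castRingHom R) *ᵥ v = r • v' := by
  obtain ⟨A, hA⟩ : ∃ A : Matrix ι ι ℤ, A.map (Int.castRingHom R) *ᵥ v = r • v' :=
    exists_intMatrix_mulVec_eq fun i ↦ show r * v' i ∈ (AddSubgroup.closure (range v) : Set R) from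
      h ▸ mem_image_of_mem _ (AddSubgroup.subset_closure (mem_range_self i))
  choose x hx hxv using fun i ↦
    show v i ∈ (r * ·) '' AddSubgroup.closure (range v') from
      h ▸ AddSubgroup.subset_closure (mem_range_self i)
  obtain ⟨B, hB⟩ := exists_intMatrix_mulVec_eq hx
  have hBA : B * A = 1 := hv.intCast_map_mulVec_injective <| by
    calc (B * A).map (Int.castRingHom R) *ᵥ v
        = B.map (Int.castRingHom R) *ᵥ (r • v') := by rw [Matrix.map_mul, ← mulVec_mulVec, hA]
      _ = v := by rw [mulVec_smul, hB]; exact funext hxv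
      _ = (1 : Matrix ι ι ℤ).map (Int.castRingHom R) *ᵥ v := by simp
  exact ⟨⟨A, B, mul_eq_one_comm.1 hBA, hBA⟩, hA⟩

end

def latticeBasis (μ ν : ℝ) : Fin 3 → ℝ := ![2 * μ, 2 * ν, 1]

lemma range_latticeBasis (μ ν : ℝ) : range (latticeBasis μ ν) = {1, 2 * μ, 2 * ν} := by
  ext x
  simp only [latticeBasis, range_cons, range_empty, union_empty, singleton_union, mem_insert_iff,
    mem_singleton_iff]
  tauto

lemma linearIndependent_latticeBasis {μ ν : ℝ} (h : LinearIndependent ℚ ![(1 : ℝ), μ, ν]) :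
    LinearIndependent ℤ (latticeBasis μ ν) := by
  let two : ℚˣ := Units.mk0 2 two_ne_zero
  have hw : latticeBasis μ ν = ![two, two, 1] • (![1, μ, ν] ∘ finRotate 3) := by
    ext i; fin_cases i <;> simp [latticeBasis, two, Units.smul_def, Rat.smul_def]
  rw [hw]
  exact ((h.comp _ (finRotate 3).injective).units_smul _).restrict_scalars' ℤ

lemma intCast_map_mulVec_latticeBasis (A : Matrix (Fin 3) (Fin 3) ℤ) (μ ν : ℝ) (k : Fin 3) :
    (A.map (Int.castRingHom ℝ) *ᵥ latticeBasis μ ν) k =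
      2 * (A k 0 : ℝ) * μ + 2 * (A k 1 : ℝ) * ν + (A k 2 : ℝ) := by
  simp only [mulVec, dotProduct, Int.coe_castRingHom, map_apply, latticeBasis, Fin.sum_univ_three,
    Fin.isValue, cons_val_zero, cons_val_one, cons_val, mul_one]
  ring

theorem stmt13_general (μ ν μ' ν' r : ℝ) (hr : 0 < r)
    (hli : LinearIndependent ℚ ![(1 : ℝ), μ, ν])
    (heq : (AddSubgroup.closure {1, 2*μ, 2*ν} : Set ℝ) =
      (fun x => r * x) '' (AddSubgroup.closure {1, 2*μ', 2*ν'} : Set ℝ)) :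
    ∃ A : GL (Fin 3) ℤ,
      2 * ((A : Matrix (Fin 3) (Fin 3) ℤ) 2 0 : ℝ) * μ + 2 * ((A : Matrix (Fin 3) (Fin 3) ℤ) 2 1 : ℝ) * ν +
        ((A : Matrix (Fin 3) (Fin 3) ℤ) 2 2 : ℝ) ≠ 0 ∧
      2 * μ' = (2 * ((A : Matrix (Fin 3) (Fin 3) ℤ) 0 0 : ℝ) * μ + 2 * ((A : Matrix (Fin 3) (Fin 3) ℤ) 0 1 : ℝ) * ν +
          ((A : Matrix (Fin 3) (Fin 3) ℤ) 0 2 : ℝ)) /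
        (2 * ((A : Matrix (Fin 3) (Fin 3) ℤ) 2 0 : ℝ) * μ + 2 * ((A : Matrix (Fin 3) (Fin 3) ℤ) 2 1 : ℝ) * ν +
          ((A : Matrix (Fin 3) (Fin 3) ℤ) 2 2 : ℝ)) ∧
      2 * ν' = (2 * ((A : Matrix (Fin 3) (Fin 3) ℤ) 1 0 : ℝ) * μ + 2 * ((A : Matrix (Fin 3) (Fin 3) ℤ) 1 1 : ℝ) * ν +
          ((A : Matrix (Fin 3) (Fin 3) ℤ) 1 2 : ℝ)) /
        (2 * ((A : Matrix (Fin 3) (Fin 3) ℤ) 2 0 : ℝ) * μ + 2 * ((A : Matrix (Fin 3) (Fin 3) ℤ) 2 1 : ℝ) * ν +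
          ((A : Matrix (Fin 3) (Fin 3) ℤ) 2 2 : ℝ)) := by
  rw [← range_latticeBasis, ← range_latticeBasis] at heq
  obtain ⟨A, hA⟩ := exists_GL_mulVec_eq_smul_of_closure_eq (linearIndependent_latticeBasis hli) heq
  have hrow (k : Fin 3) := (intCast_map_mulVec_latticeBasis _ μ ν k).symm.trans (congr_fun hA k)
  refine ⟨A, ?_, ?_, ?_⟩ <;> simp only [hrow, Pi.smul_apply, latticeBasis] <;> simp [hr.ne']

theorem stmt13 (μ ν μ' ν' r : ℝ) (hr : 0 < r)
    (hli : LinearIndependent ℚ ![(1 : ℝ), μ, ν])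
    (hli' : LinearIndependent ℚ ![(1 : ℝ), μ', ν'])
    (heq : (AddSubgroup.closure {1, 2*μ, 2*ν} : Set ℝ) =
      (fun x => r * x) '' (AddSubgroup.closure {1, 2*μ', 2*ν'} : Set ℝ)) :
    ∃ A : GL (Fin 3) ℤ,
      2 * ((A : Matrix (Fin 3) (Fin 3) ℤ) 2 0 : ℝ) * μ + 2 * ((A : Matrix (Fin 3) (Fin 3) ℤ) 2 1 : ℝ) * ν +
        ((A : Matrix (Fin 3) (Fin 3) ℤ) 2 2 : ℝ) ≠ 0 ∧
      2 * μ' = (2 * ((A : Matrix (Fin 3) (Fin 3) ℤ) 0 0 : ℝ) * μ + 2 * ((A : Matrix (Fin 3) (Fin 3) ℤ) 0 1 : ℝ) * ν +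
          ((A : Matrix (Fin 3) (Fin 3) ℤ) 0 2 : ℝ)) /
        (2 * ((A : Matrix (Fin 3) (Fin 3) ℤ) 2 0 : ℝ) * μ + 2 * ((A : Matrix (Fin 3) (Fin 3) ℤ) 2 1 : ℝ) * ν +
          ((A : Matrix (Fin 3) (Fin 3) ℤ) 2 2 : ℝ)) ∧
      2 * ν' = (2 * ((A : Matrix (Fin 3) (Fin 3) ℤ) 1 0 : ℝ) * μ + 2 * ((A : Matrix (Fin 3) (Fin 3) ℤ) 1 1 : ℝ) * ν +
          ((A : Matrix (Fin 3) (Fin 3) ℤ) 1 2 : ℝ)) /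
        (2 * ((A : Matrix (Fin 3) (Fin 3) ℤ) 2 0 : ℝ) * μ + 2 * ((A : Matrix (Fin 3) (Fin 3) ℤ) 2 1 : ℝ) * ν +
          ((A : Matrix (Fin 3) (Fin 3) ℤ) 2 2 : ℝ)) :=
  stmt13_general μ ν μ' ν' r hr hli heq
end

section
/- Every matrix in GL₃(ℤ) can be written as a product A₁A₂A₃ where A₁ has third row (0,0,1), A₂ has the form ((G,0,H),(0,1,0),(I,0,J)), and A₃ has the block form ((K,L,0),(M,N,0),(0,0,1)), with all Aᵢ ∈ GL₃(ℤ). -/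
/-!
A factorization `A = A₁ A₂ A₃` with `A₁` of the required shape exists as soon as `A₂ A₃` has the
same bottom row as `A`, since then `A (A₂ A₃)⁻¹` has bottom row `(0, 0, 1)`. Write the bottom row
of `A` as `(g a, g b, c)` with `g = gcd` of its first two entries, so that `(a, b)` is coprime;
`(g, c)` is coprime too because the bottom row of an invertible matrix is unimodular. Complete
`(a, b)` to the top row of some `P ∈ SL₂` and `(g, c)` to the bottom row of some `Q ∈ SL₂`; placing
`P` on the coordinates `0, 1` and `Q` on the coordinates `0, 2` of `GL₃` gives `A₃` and `A₂`.
-/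

open Matrix MatrixGroups

theorem exists_eq_mul_mul_isCoprime {R : Type*} [EuclideanDomain R] [GCDMonoid R] (a b : R) :
    ∃ g a' b', a = g * a' ∧ b = g * b' ∧ IsCoprime a' b' := by
  by_cases h : gcd a b = 0
  · obtain ⟨rfl, rfl⟩ := (gcd_eq_zero_iff a b).mp h
    exact ⟨0, 1, 0, by simp, by simp, isCoprime_one_left⟩
  · exact ⟨gcd a b, a / gcd a b, b / gcd a b,
      (EuclideanDomain.mul_div_cancel' h (gcd_dvd_left a b)).symm,
      (EuclideanDomain.mul_div_cancel' h (gcd_dvd_right a b)).symm,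
      isCoprime_div_gcd_div_gcd_of_gcd_ne_zero h⟩

namespace Matrix

variable {R : Type*} [CommRing R]

namespace SpecialLinearGroup

def embed01 (P : SL(2, R)) : SL(3, R) :=
  ⟨!![P 0 0, P 0 1, 0; P 1 0, P 1 1, 0; 0, 0, 1], by
    have h := P.det_coe
    rw [det_fin_two] at h
    simp [det_fin_three]
    linear_combination h⟩

def embed02 (Q : SL(2, R)) : SL(3, R) :=
  ⟨!![Q 0 0, 0, Q 0 1; 0, 1, 0; Q 1 0, 0, Q 1 1], by
    have h := Q.det_coe
    rw [det_fin_two] at h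
    simp [det_fin_three]
    linear_combination h⟩

@[simp]
theorem coe_embed01 (P : SL(2, R)) :
    (embed01 P : Matrix (Fin 3) (Fin 3) R) = !![P 0 0, P 0 1, 0; P 1 0, P 1 1, 0; 0, 0, 1] :=
  rfl

@[simp]
theorem coe_embed02 (Q : SL(2, R)) :
    (embed02 Q : Matrix (Fin 3) (Fin 3) R) = !![Q 0 0, 0, Q 0 1; 0, 1, 0; Q 1 0, 0, Q 1 1] :=
  rfl

end SpecialLinearGroup

namespace GeneralLinearGroup

variable {n : Type*} [Fintype n] [DecidableEq n]

theorem sum_apply_mul_inv_apply (A : GL n R) (i : n) :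
    ∑ k, (A : Matrix n n R) i k * (A⁻¹ : GL n R) k i = 1 := by
  have h := congrFun (congrFun A.mul_inv i) i
  rwa [mul_apply, one_apply_eq] at h

theorem mul_inv_row_eq_of_row_eq {A B : GL n R} {i : n}
    (h : (A : Matrix n n R) i = (B : Matrix n n R) i) :
    ((A * B⁻¹ : GL n R) : Matrix n n R) i = (1 : Matrix n n R) i :=
  calc ((A * B⁻¹ : GL n R) : Matrix n n R) i = (A : Matrix n n R) i ᵥ* ↑B⁻¹ := rfl
    _ = (B : Matrix n n R) i ᵥ* ↑B⁻¹ := by rw [h]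
    _ = ((B * B⁻¹ : GL n R) : Matrix n n R) i := rfl
    _ = (1 : Matrix n n R) i := by rw [mul_inv_cancel]; rfl

theorem isCoprime_of_apply_two_eq_mul {A : GL (Fin 3) R} {g a b : R}
    (h0 : (A : Matrix (Fin 3) (Fin 3) R) 2 0 = g * a)
    (h1 : (A : Matrix (Fin 3) (Fin 3) R) 2 1 = g * b) :
    IsCoprime g ((A : Matrix (Fin 3) (Fin 3) R) 2 2) := by
  have h := sum_apply_mul_inv_apply A 2
  rw [Fin.sum_univ_three, h0, h1] at h
  exact ⟨a * (A⁻¹ : GL (Fin 3) R) 0 2 + b * (A⁻¹ : GL (Fin 3) R) 1 2, (A⁻¹ : GL (Fin 3) R) 2 2,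
    by linear_combination h⟩

theorem exists_eq_mul_mul_of_apply_two_eq_mul (A : GL (Fin 3) R) {g a b : R}
    (h0 : (A : Matrix (Fin 3) (Fin 3) R) 2 0 = g * a)
    (h1 : (A : Matrix (Fin 3) (Fin 3) R) 2 1 = g * b) (hab : IsCoprime a b) :
    ∃ A₁ A₂ A₃ : GL (Fin 3) R, A = A₁ * A₂ * A₃ ∧
      ((A₁ : Matrix (Fin 3) (Fin 3) R) 2 0 = 0 ∧ (A₁ : Matrix (Fin 3) (Fin 3) R) 2 1 = 0 ∧
        (A₁ : Matrix (Fin 3) (Fin 3) R) 2 2 = 1) ∧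
      ((A₂ : Matrix (Fin 3) (Fin 3) R) 0 1 = 0 ∧ (A₂ : Matrix (Fin 3) (Fin 3) R) 1 0 = 0 ∧
        (A₂ : Matrix (Fin 3) (Fin 3) R) 1 1 = 1 ∧ (A₂ : Matrix (Fin 3) (Fin 3) R) 1 2 = 0 ∧
        (A₂ : Matrix (Fin 3) (Fin 3) R) 2 1 = 0) ∧
      ((A₃ : Matrix (Fin 3) (Fin 3) R) 0 2 = 0 ∧ (A₃ : Matrix (Fin 3) (Fin 3) R) 1 2 = 0 ∧
        (A₃ : Matrix (Fin 3) (Fin 3) R) 2 0 = 0 ∧ (A₃ : Matrix (Fin 3) (Fin 3) R) 2 1 = 0 ∧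
        (A₃ : Matrix (Fin 3) (Fin 3) R) 2 2 = 1) := by
  obtain ⟨P, hP0, hP1⟩ := hab.exists_SL2_row 0
  obtain ⟨Q, hQ0, hQ1⟩ := (isCoprime_of_apply_two_eq_mul h0 h1).exists_SL2_row 1
  set A₂ : GL (Fin 3) R := SpecialLinearGroup.toGL (SpecialLinearGroup.embed02 Q)
  set A₃ : GL (Fin 3) R := SpecialLinearGroup.toGL (SpecialLinearGroup.embed01 P)
  have hrow : (A : Matrix (Fin 3) (Fin 3) R) 2 =
      ((A₂ * A₃ : GL (Fin 3) R) : Matrix (Fin 3) (Fin 3) R) 2 := by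
    ext j
    fin_cases j <;> simp [A₂, A₃, mul_apply, Fin.sum_univ_three, *]
  have hA₁ := mul_inv_row_eq_of_row_eq hrow
  refine ⟨A * (A₂ * A₃)⁻¹, A₂, A₃, by group, ?_, by simp [A₂], by simp [A₃]⟩
  exact ⟨by simpa using congrFun hA₁ 0, by simpa using congrFun hA₁ 1,
    by simpa using congrFun hA₁ 2⟩

end GeneralLinearGroup

end Matrix

theorem stmt14 (A : GL (Fin 3) ℤ) :
    ∃ A₁ A₂ A₃ : GL (Fin 3) ℤ, A = A₁ * A₂ * A₃ ∧
      ((A₁ : Matrix (Fin 3) (Fin 3) ℤ) 2 0 = 0 ∧ (A₁ : Matrix (Fin 3) (Fin 3) ℤ) 2 1 = 0 ∧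
        (A₁ : Matrix (Fin 3) (Fin 3) ℤ) 2 2 = 1) ∧
      ((A₂ : Matrix (Fin 3) (Fin 3) ℤ) 0 1 = 0 ∧ (A₂ : Matrix (Fin 3) (Fin 3) ℤ) 1 0 = 0 ∧
        (A₂ : Matrix (Fin 3) (Fin 3) ℤ) 1 1 = 1 ∧ (A₂ : Matrix (Fin 3) (Fin 3) ℤ) 1 2 = 0 ∧
        (A₂ : Matrix (Fin 3) (Fin 3) ℤ) 2 1 = 0) ∧
      ((A₃ : Matrix (Fin 3) (Fin 3) ℤ) 0 2 = 0 ∧ (A₃ : Matrix (Fin 3) (Fin 3) ℤ) 1 2 = 0 ∧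
        (A₃ : Matrix (Fin 3) (Fin 3) ℤ) 2 0 = 0 ∧ (A₃ : Matrix (Fin 3) (Fin 3) ℤ) 2 1 = 0 ∧
        (A₃ : Matrix (Fin 3) (Fin 3) ℤ) 2 2 = 1) := by
  obtain ⟨g, a, b, h0, h1, hab⟩ := exists_eq_mul_mul_isCoprime
    ((A : Matrix (Fin 3) (Fin 3) ℤ) 2 0) ((A : Matrix (Fin 3) (Fin 3) ℤ) 2 1)
  exact GeneralLinearGroup.exists_eq_mul_mul_of_apply_two_eq_mul A h0 h1 hab
end
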